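/- Let h ≥ 2 be an integer and let H be a finite-index subgroup of the genus-h surface group S_h. Then every finite subset of H that generates H (i.e., whose closure as a subgroup of S_h equals H) has cardinality at least 2h. -/

import Mathlib

open scoped commutatorElement

/-- The surface relator `[a₁,b₁][a₂,b₂]⋯[a_g,b_g]` in the free group on `2g` generators. -/
def surfaceRelator (g : ℕ) : FreeGroup (Fin (2 * g)) :=
  (List.ofFn (fun i : Fin g =>
    ⁅FreeGroup.of (⟨2 * i.val, by have := i.isLt; omega⟩ : Fin (2 * g)),
     FreeGroup.of (⟨2 * i.val + 1, by have := i.isLt; omega⟩ : Fin (2 * g))⁆)).prod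

/-- The genus-`g` surface group `S_g = ⟨a₁,b₁,…,a_g,b_g ∣ [a₁,b₁]⋯[a_g,b_g]⟩`. -/
abbrev SurfaceGroup (g : ℕ) : Type :=
  PresentedGroup ({surfaceRelator g} : Set (FreeGroup (Fin (2 * g))))

/-! Since the surface relator is a product of commutators, sending the generators to the standard
basis defines a surjection `S_h → ℤ^{2h}`. It carries a finite-index subgroup `H` onto a
finite-index subgroup of `ℤ^{2h}`, which has `ℤ`-rank `2h`, and a generating set of `H` onto a
generating set of that image; but a `ℤ`-module generated by `n` elements has rank at most `n`. -/

theorem finrank_int_le_card_of_closure_finiteIndex {M : Type*} [AddCommGroup M]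
    [Module.Finite ℤ M] (T : Finset M) (hT : (AddSubgroup.closure (T : Set M)).FiniteIndex) :
    Module.finrank ℤ M ≤ T.card := by
  set N := Submodule.span ℤ (T : Set M)
  have : Finite (M ⧸ N) := by
    rw [← Submodule.span_int_eq_addSubgroupClosure] at hT
    exact AddSubgroup.finiteIndex_iff_finite_quotient.mp hT
  have hq : Module.finrank ℤ (M ⧸ N) = 0 :=
    (isAddTorsion_iff_isTorsion_int.mp isAddTorsion_of_finite).finrank_eq_zero
  calc Module.finrank ℤ M = Module.finrank ℤ N := by
        rw [← N.finrank_quotient_add_finrank, hq, zero_add]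
    _ ≤ T.card := finrank_span_finset_le_card T

theorem finrank_int_le_card_of_surjective_of_closure_finiteIndex {G M : Type*} [Group G]
    [AddCommGroup M] [Module.Finite ℤ M] (φ : G →* Multiplicative M)
    (hφ : Function.Surjective φ) (S : Finset G) (hS : (Subgroup.closure (S : Set G)).FiniteIndex) :
    Module.finrank ℤ M ≤ S.card := by
  classical
  set T := S.image fun s => (φ s).toAdd
  have hT :
      (AddSubgroup.closure (T : Set M)).toSubgroup = (Subgroup.closure (S : Set G)).map φ := by
    rw [AddSubgroup.toSubgroup_closure, MonoidHom.map_closure]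
    congr 1
    ext x
    simp [T, Multiplicative.toAdd.injective.eq_iff]
  have : (AddSubgroup.closure (T : Set M)).FiniteIndex := by
    rw [← AddSubgroup.finiteIndex_toSubgroup_iff, hT, Subgroup.finiteIndex_iff]
    exact ne_zero_of_dvd_ne_zero hS.index_ne_zero (Subgroup.index_map_dvd _ hφ)
  exact (finrank_int_le_card_of_closure_finiteIndex T this).trans Finset.card_image_le

theorem Subgroup.closure_range_ofAdd_single_eq_top (ι : Type*) [Finite ι] [DecidableEq ι] :
    Subgroup.closure (Set.range fun i : ι => Multiplicative.ofAdd (Pi.single i (1 : ℤ))) = ⊤ := by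
  have h : AddSubgroup.closure (Set.range (Pi.basisFun ℤ ι)) = ⊤ := by
    rw [← Submodule.span_int_eq_addSubgroupClosure, (Pi.basisFun ℤ ι).span_eq,
      Submodule.top_toAddSubgroup]
  have := congrArg AddSubgroup.toSubgroup h
  rw [AddSubgroup.toSubgroup_closure, map_top] at this
  convert this using 2
  ext x
  constructor
  · rintro ⟨i, rfl⟩
    exact ⟨i, by simp⟩
  · rintro ⟨i, hi⟩
    exact ⟨i, Multiplicative.toAdd.injective (by simpa using hi)⟩

theorem FreeGroup.lift_surfaceRelator {A : Type*} [CommGroup A] {g : ℕ} (f : Fin (2 * g) → A) :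
    FreeGroup.lift f (surfaceRelator g) = 1 := by
  rw [surfaceRelator, map_list_prod, List.map_ofFn]
  refine List.prod_eq_one fun x hx => ?_
  obtain ⟨i, rfl⟩ := List.mem_ofFn.mp hx
  rw [Function.comp_apply, map_commutatorElement, commutatorElement_eq_one_iff_commute]
  exact Commute.all _ _

namespace SurfaceGroup

def toFreeAbelian (g : ℕ) : SurfaceGroup g →* Multiplicative (Fin (2 * g) → ℤ) :=
  PresentedGroup.toGroup (f := fun i => Multiplicative.ofAdd (Pi.single i 1)) <| by
    rintro r rfl
    exact FreeGroup.lift_surfaceRelator _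

theorem toFreeAbelian_of (g : ℕ) (i : Fin (2 * g)) :
    toFreeAbelian g (PresentedGroup.of i) = Multiplicative.ofAdd (Pi.single i 1) :=
  PresentedGroup.toGroup.of _

theorem toFreeAbelian_surjective (g : ℕ) : Function.Surjective (toFreeAbelian g) := by
  rw [← MonoidHom.range_eq_top, MonoidHom.range_eq_map, ← PresentedGroup.closure_range_of,
    MonoidHom.map_closure, ← Set.range_comp]
  simp only [Function.comp_def, toFreeAbelian_of]
  exact Subgroup.closure_range_ofAdd_single_eq_top _

end SurfaceGroup

theorem stmt4_general (h : ℕ) (H : Subgroup (SurfaceGroup h)) (hH : H.FiniteIndex)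
    (S : Finset (SurfaceGroup h)) (hgen : Subgroup.closure (S : Set (SurfaceGroup h)) = H) :
    2 * h ≤ S.card := by
  have hrank := finrank_int_le_card_of_surjective_of_closure_finiteIndex _
    (SurfaceGroup.toFreeAbelian_surjective h) S (hgen ▸ hH)
  rwa [Module.finrank_fintype_fun_eq_card, Fintype.card_fin] at hrank

/-- Any finite generating set of a finite-index subgroup of the genus-`h`
surface group (`h ≥ 2`) has cardinality at least `2h`. -/
theorem stmt4 (h : ℕ) (hh : 2 ≤ h) (H : Subgroup (SurfaceGroup h)) (hH : H.FiniteIndex)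
    (S : Finset (SurfaceGroup h)) (hgen : Subgroup.closure (S : Set (SurfaceGroup h)) = H) :
    2 * h ≤ S.card :=
  stmt4_general h H hH S hgen
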